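/- (Strictly delocalized regime, constrained case.) For every 0 < δ < 1, Z^c_{δ,N} ~ (δ c_q/(1−δ)^2) · L(N)/N^{3/2} as N → ∞. -/

import Mathlib

open Filter Finset

/-- The `k`-fold convolution of `q : ℕ → ℝ` with itself. -/
noncomputable def convPow (q : ℕ → ℝ) : ℕ → ℕ → ℝ
  | 0, n => if n = 0 then 1 else 0
  | k + 1, n => ∑ i ∈ Finset.range (n + 1), convPow q k i * q (n - i)

/-- `L : ℕ → ℝ` is slowly varying at infinity: `L(⌊cn⌋)/L(n) → 1` for every `c > 0`. -/
def SlowlyVaryingNat (L : ℕ → ℝ) : Prop :=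
  ∀ c : ℝ, 0 < c → Tendsto (fun n : ℕ => L ⌊c * (n : ℝ)⌋₊ / L n) atTop (nhds 1)

/-- The (modified) constrained partition function `Z^c_{δ,N} = ∑_{k=0}^{N} δ^k q^{k*}(N)`. -/
noncomputable def Zc (q : ℕ → ℝ) (δ : ℝ) (N : ℕ) : ℝ :=
  ∑ k ∈ Finset.range (N + 1), δ ^ k * convPow q k N

/-!
Since `q n ≈ c_q L(n) n^{-3/2}` with `L` slowly varying, the uniform convergence theorem for `L`
(a Baire category argument) makes `q` long-tailed, `q (n - i) ~ q n`, and comparable to `q n` on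
`[n/2, n]`. For such `q` a convolution `∑ u i q (n - i)` with summable `u = O(q)` is asymptotic to
`(∑ u + lim u/q) q n`: the mass of `u` near `0` meets `q` near `n`, `u` near `n` meets the mass of
`q`, and the middle range is negligible. The partition function solves the renewal equation
`Z n = δ ∑ Z i q (n - i)` and `∑ Z = 1/(1-δ)`, so `ℓ = lim Z/q` satisfies `ℓ = δ (1/(1-δ) + ℓ)`,
i.e. `ℓ = δ/(1-δ)^2`. To make this rigorous one first bootstraps `Z = O(q)` from the renewal
equation, then squeezes `liminf Z/q` and `limsup Z/q` between the two sides of the fixed point.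
-/

open Set Real Topology

lemma abs_mul_sub_one_le {x y ε : ℝ} (hx : |x - 1| ≤ ε) (hy : |y - 1| ≤ ε) :
    |x * y - 1| ≤ ε * (2 + ε) := by
  have hε : 0 ≤ ε := (abs_nonneg _).trans hx
  calc |x * y - 1| = |(x - 1) * (y - 1) + (x - 1) + (y - 1)| := by ring_nf
    _ ≤ |x - 1| * |y - 1| + |x - 1| + |y - 1| := by
      rw [← abs_mul]; exact abs_add_three _ _ _
    _ ≤ ε * ε + ε + ε := by gcongr
    _ = ε * (2 + ε) := by ring

namespace SlowlyVaryingNat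

variable {L : ℕ → ℝ}

theorem exists_window (hL : SlowlyVaryingNat L) {ε : ℝ} (hε : 0 < ε) :
    ∃ a b : ℝ, 0 < a ∧ a < b ∧
      ∀ᶠ N : ℕ in atTop, ∀ t ∈ Ioo a b, |L ⌊t * N⌋₊ / L N - 1| ≤ ε := by
  set F : ℕ → Set ℝ := fun n => {s | ∀ N ≥ n, |L ⌊exp s * N⌋₊ / L N - 1| ≤ ε}
  have hcover : ⋃ n, closure (F n) = univ := by
    refine eq_univ_of_forall fun s => mem_iUnion.2 ?_
    have h := (hL _ (exp_pos s)).eventually (Metric.closedBall_mem_nhds 1 hε)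
    obtain ⟨n, hn⟩ := eventually_atTop.1 h
    exact ⟨n, subset_closure fun N hN => by simpa [Real.dist_eq] using hn N hN⟩
  obtain ⟨n₀, x₀, hx₀⟩ :=
    nonempty_interior_of_iUnion_of_closed (fun _ => isClosed_closure) hcover
  obtain ⟨r, hr, hball⟩ := Metric.isOpen_iff.1 isOpen_interior x₀ hx₀
  refine ⟨exp (x₀ - r), exp (x₀ + r), exp_pos _, exp_lt_exp.2 (by linarith), ?_⟩
  filter_upwards [eventually_ge_atTop (max n₀ 1)] with N hN t ht
  have hN0 : (0 : ℝ) < N := by exact_mod_cast (le_of_max_le_right hN)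
  have ht0 : 0 < t := (exp_pos _).trans ht.1
  set j := ⌊t * N⌋₊
  -- `F n₀` is dense near `log t`, and moving `t` slightly to the right does not change `j`
  set m := min (exp (x₀ + r)) ((j + 1) / N)
  have htm : t < m := lt_min ht.2 ((lt_div_iff₀ hN0).2 (Nat.lt_floor_add_one _))
  have hsub : Ioo (log t) (log m) ⊆ closure (F n₀) := by
    intro s hs
    refine interior_subset (hball ?_)
    have h1 : x₀ - r < log t := (lt_log_iff_exp_lt ht0).2 ht.1
    have h2 : log m ≤ x₀ + r := (log_le_iff_le_exp (ht0.trans htm)).2 (min_le_left _ _)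
    rw [Metric.mem_ball, Real.dist_eq, abs_lt]
    constructor <;> linarith [hs.1, hs.2]
  have hlog : log t < log m := log_lt_log ht0 htm
  have hmid : (log t + log m) / 2 ∈ Ioo (log t) (log m) := ⟨by linarith, by linarith⟩
  obtain ⟨s, hsF, hs⟩ :=
    (closure_inter_open_nonempty_iff isOpen_Ioo).1 ⟨_, hsub hmid, hmid⟩
  have hts : t < exp s := by simpa [exp_log ht0] using exp_lt_exp.2 hs.1
  have hsm : exp s < m := by simpa [exp_log (ht0.trans htm)] using exp_lt_exp.2 hs.2
  have hfloor : ⌊exp s * N⌋₊ = j := by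
    rw [Nat.floor_eq_iff (by positivity)]
    constructor
    · exact (Nat.floor_le (by positivity)).trans (by gcongr)
    · exact (lt_div_iff₀ hN0).1 (hsm.trans_le (min_le_right _ _))
  simpa [hfloor] using hsF N (le_of_max_le_left hN)

theorem eventually_abs_div_sub_one_le_of_window (hL : SlowlyVaryingNat L)
    (hLpos : ∀ n, 0 < L n) {ε a b a' b' c : ℝ} (hε : 0 < ε) (hb : 0 < b) (haa' : a < a')
    (hbb' : b' < b) (hc : 0 < c)
    (hwin : ∀ᶠ N : ℕ in atTop, ∀ t ∈ Ioo a b, |L ⌊t * N⌋₊ / L N - 1| ≤ ε) :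
    ∀ᶠ N : ℕ in atTop, ∀ j : ℕ, c * a' * N ≤ j → (j : ℝ) ≤ c * b' * N →
      |L j / L N - 1| ≤ ε * (2 + ε) := by
  have hcN : Tendsto (fun N : ℕ => c * N) atTop atTop :=
    tendsto_natCast_atTop_atTop.const_mul_atTop hc
  have hM : Tendsto (fun N : ℕ => ⌊c * N⌋₊) atTop atTop := tendsto_nat_floor_atTop.comp hcN
  have hbN : ∀ᶠ N : ℕ in atTop, b ≤ c * N * (b - b') :=
    (hcN.atTop_mul_const (sub_pos.2 hbb')).eventually_ge_atTop b
  filter_upwards [(hL c hc).eventually (Metric.closedBall_mem_nhds 1 hε),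
    hM.eventually hwin, hM.eventually_ge_atTop 1, hbN] with N hLN hwinM hM1 hbN j hj₁ hj₂
  set M := ⌊c * N⌋₊
  have hM0 : (0 : ℝ) < M := by exact_mod_cast hM1
  have hMle : (M : ℝ) ≤ c * N := Nat.floor_le (by positivity)
  have hMgt : c * N - 1 < M := by linarith [Nat.lt_floor_add_one (c * N)]
  have hjM : ⌊(j / M : ℝ) * M⌋₊ = j := by rw [div_mul_cancel₀ _ hM0.ne', Nat.floor_natCast]
  have hja : a < j / M := by
    have hcN0 : 0 < c * N := hM0.trans_le hMle
    rw [lt_div_iff₀ hM0]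
    rcases le_or_gt 0 a with ha | ha
    · nlinarith [mul_le_mul_of_nonneg_left hMle ha]
    · nlinarith [(Nat.cast_nonneg j : (0 : ℝ) ≤ j)]
  have hjb : j / M < b := by
    rw [div_lt_iff₀ hM0]
    nlinarith
  have h₁ : |L j / L M - 1| ≤ ε := by simpa [hjM] using hwinM _ ⟨hja, hjb⟩
  have h₂ : |L M / L N - 1| ≤ ε := by simpa [Real.dist_eq] using hLN
  have hprod : L j / L N = L j / L M * (L M / L N) := by
    field_simp [(hLpos M).ne', (hLpos N).ne']
  rw [hprod]
  exact abs_mul_sub_one_le h₁ h₂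

theorem eventually_abs_div_sub_one_le (hL : SlowlyVaryingNat L) (hLpos : ∀ n, 0 < L n)
    {η : ℝ} (hη : 0 < η) :
    ∀ᶠ N : ℕ in atTop, ∀ j : ℕ, N ≤ 2 * j → j ≤ N → |L j / L N - 1| ≤ η := by
  obtain ⟨ε, hε, hεη⟩ : ∃ ε : ℝ, 0 < ε ∧ ε * (2 + ε) ≤ η :=
    have h0 : 0 < min 1 (η / 3) := lt_min one_pos (by linarith)
    ⟨_, h0, by nlinarith [min_le_left 1 (η / 3), min_le_right 1 (η / 3)]⟩
  obtain ⟨a, b, ha, hab, hwin⟩ := hL.exists_window hε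
  obtain ⟨a', b', haa', ha'b', hb'b⟩ : ∃ a' b', a < a' ∧ a' < b' ∧ b' < b :=
    ⟨(2 * a + b) / 3, (a + 2 * b) / 3, by linarith, by linarith, by linarith⟩
  -- compactness of `[1/2, 1]` reduces the claim to finitely many dilates of the window
  have hcover : Icc (1 / 2 : ℝ) 1 ⊆ ⋃ c : Ioi (0 : ℝ), Ioo (c * a') (c * b') := by
    intro t ht
    have ht0 : 0 < t := by linarith [ht.1]
    have hab' : 0 < a' + b' := by linarith
    refine mem_iUnion.2 ⟨⟨2 * t / (a' + b'), div_pos (by linarith) hab'⟩, ?_, ?_⟩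
    · change 2 * t / (a' + b') * a' < t
      rw [div_mul_eq_mul_div, div_lt_iff₀ hab']; nlinarith
    · change t < 2 * t / (a' + b') * b'
      rw [div_mul_eq_mul_div, lt_div_iff₀ hab']; nlinarith
  obtain ⟨s, hs⟩ := isCompact_Icc.elim_finite_subcover _ (fun _ => isOpen_Ioo) hcover
  have hall := (s.eventually_all).2 fun c _ =>
    hL.eventually_abs_div_sub_one_le_of_window hLpos hε (ha.trans hab) haa' hb'b c.2 hwin
  filter_upwards [hall, eventually_ge_atTop 1] with N hN hN1 j hj₁ hj₂
  have hN0 : (0 : ℝ) < N := by exact_mod_cast hN1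
  have hj₁' : (N : ℝ) ≤ 2 * j := by exact_mod_cast hj₁
  have hj₂' : (j : ℝ) ≤ N := by exact_mod_cast hj₂
  have htN : (j / N : ℝ) ∈ Icc (1 / 2 : ℝ) 1 := by
    rw [Set.mem_Icc, le_div_iff₀ hN0, div_le_iff₀ hN0]
    constructor <;> linarith
  obtain ⟨c, hc, hjc⟩ := mem_iUnion₂.1 (hs htN)
  rw [Set.mem_Ioo, lt_div_iff₀ hN0, div_lt_iff₀ hN0] at hjc
  exact (hN c hc j hjc.1.le hjc.2.le).trans hεη

end SlowlyVaryingNat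

/-- A long-tailed probability density on `ℕ` that is comparable to `q n` on `[n/2, n]`
(a sufficient condition for subexponentiality). -/
structure SubexpDensity (q : ℕ → ℝ) : Prop where
  nonneg : ∀ n, 0 ≤ q n
  hasSum : HasSum q 1
  eventually_pos : ∀ᶠ n in atTop, 0 < q n
  tendsto_shift : ∀ i, Tendsto (fun n => q (n - i) / q n) atTop (𝓝 1)
  exists_le_mul : ∃ C, ∀ᶠ n in atTop, ∀ j, n ≤ 2 * j → j ≤ n → q j ≤ C * q n

section RegularlyVarying

variable {L q : ℕ → ℝ} {c ρ : ℝ}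

lemma eventually_pos_of_tendsto_rpow_mul_div (hLpos : ∀ n, 0 < L n) (hc : 0 < c)
    (hqL : Tendsto (fun n : ℕ => (n : ℝ) ^ ρ * q n / L n) atTop (𝓝 c)) :
    ∀ᶠ n in atTop, 0 < q n := by
  filter_upwards [hqL.eventually (eventually_gt_nhds hc), eventually_ge_atTop 1] with n hn hn1
  have hρn : 0 < (n : ℝ) ^ ρ := rpow_pos_of_pos (by exact_mod_cast hn1) ρ
  exact pos_of_mul_pos_right (div_pos_iff_of_pos_right (hLpos n) |>.1 hn) hρn.le

lemma div_eq_mul_rpow_of_pos (hLpos : ∀ n, 0 < L n) {j N : ℕ} (hj : 0 < j) (hN : 0 < N)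
    (hqN : 0 < q N) :
    q j / q N = (j ^ ρ * q j / L j) / (N ^ ρ * q N / L N) * (L j / L N) * ((N : ℝ) / j) ^ ρ := by
  have hj' : (0 : ℝ) < j := by exact_mod_cast hj
  have hN' : (0 : ℝ) < N := by exact_mod_cast hN
  rw [div_rpow hN'.le hj'.le]
  have := rpow_pos_of_pos hj' ρ
  have := rpow_pos_of_pos hN' ρ
  have := hLpos j
  have := hLpos N
  field_simp

lemma tendsto_shift_div_of_tendsto_rpow_mul_div (hL : SlowlyVaryingNat L)
    (hLpos : ∀ n, 0 < L n) (hc : 0 < c)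
    (hqL : Tendsto (fun n : ℕ => (n : ℝ) ^ ρ * q n / L n) atTop (𝓝 c)) (i : ℕ) :
    Tendsto (fun n => q (n - i) / q n) atTop (𝓝 1) := by
  have hg : Tendsto (fun n : ℕ => ((n - i : ℕ) : ℝ) ^ ρ * q (n - i) / L (n - i) /
      ((n : ℝ) ^ ρ * q n / L n)) atTop (𝓝 1) := by
    have h := (hqL.comp (tendsto_sub_atTop_nat i)).div hqL hc.ne'
    rwa [div_self hc.ne'] at h
  have hLr : Tendsto (fun n => L (n - i) / L n) atTop (𝓝 1) := by
    refine Metric.tendsto_nhds.2 fun η hη => ?_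
    filter_upwards [hL.eventually_abs_div_sub_one_le hLpos (half_pos hη),
      eventually_ge_atTop (2 * i)] with n hn hni
    exact (hn _ (by omega) (by omega)).trans_lt (half_lt_self hη)
  have hpow : Tendsto (fun n : ℕ => ((n : ℝ) / (n - i : ℕ)) ^ ρ) atTop (𝓝 1) := by
    have := (tendsto_natCast_div_add_atTop (-(i : ℝ))).rpow_const (p := ρ) (Or.inl one_ne_zero)
    rw [one_rpow] at this
    refine this.congr' ?_
    filter_upwards [eventually_ge_atTop i] with n hn
    rw [Nat.cast_sub hn, sub_eq_add_neg]
  have h := (hg.mul hLr).mul hpow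
  rw [mul_one, mul_one] at h
  refine h.congr' ?_
  filter_upwards [eventually_ge_atTop (i + 1),
    eventually_pos_of_tendsto_rpow_mul_div hLpos hc hqL] with n hn hqn
  exact (div_eq_mul_rpow_of_pos hLpos (by omega) (by omega) hqn).symm

lemma exists_le_mul_of_tendsto_rpow_mul_div (hL : SlowlyVaryingNat L)
    (hLpos : ∀ n, 0 < L n) (hc : 0 < c) (hρ : 0 ≤ ρ)
    (hqL : Tendsto (fun n : ℕ => (n : ℝ) ^ ρ * q n / L n) atTop (𝓝 c)) :
    ∃ C, ∀ᶠ n in atTop, ∀ j, n ≤ 2 * j → j ≤ n → q j ≤ C * q n := by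
  refine ⟨4 * 2 * 2 ^ ρ, ?_⟩
  obtain ⟨n₀, hn₀⟩ := eventually_atTop.1
    (hqL.eventually (Ioo_mem_nhds (half_lt_self hc) (lt_two_mul_self hc)))
  filter_upwards [hL.eventually_abs_div_sub_one_le hLpos one_pos,
    eventually_ge_atTop (2 * n₀ + 1), eventually_pos_of_tendsto_rpow_mul_div hLpos hc hqL]
    with n hn hnn₀ hqn j hj₁ hj₂
  rw [← div_le_iff₀ hqn, div_eq_mul_rpow_of_pos hLpos (by omega) (by omega) hqn]
  obtain ⟨hgj₁, hgj₂⟩ := hn₀ j (by omega)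
  obtain ⟨hgn₁, hgn₂⟩ := hn₀ n (by omega)
  have hg : (j ^ ρ * q j / L j) / (n ^ ρ * q n / L n) ≤ 4 := by
    rw [div_le_iff₀ (by linarith)]; linarith
  have hLj : L j / L n ≤ 2 := by linarith [(abs_le.1 (hn j hj₁ hj₂)).2]
  have hpow : ((n : ℝ) / j) ^ ρ ≤ 2 ^ ρ := by
    have hj0 : (0 : ℝ) < j := by exact_mod_cast (show 0 < j by omega)
    refine rpow_le_rpow (by positivity) ((div_le_iff₀ hj0).2 ?_) hρ
    exact_mod_cast (show n ≤ 2 * j from hj₁)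
  have hg0 : 0 ≤ (j ^ ρ * q j / L j) / (n ^ ρ * q n / L n) := div_nonneg (by linarith) (by linarith)
  have hL0 : 0 ≤ L j / L n := (div_pos (hLpos j) (hLpos n)).le
  exact mul_le_mul (mul_le_mul hg hLj hL0 (by norm_num)) hpow (by positivity) (by norm_num)

theorem subexpDensity_of_tendsto_rpow_mul_div (hL : SlowlyVaryingNat L)
    (hLpos : ∀ n, 0 < L n) (hc : 0 < c) (hρ : 0 ≤ ρ) (hq : ∀ n, 0 ≤ q n) (hqs : HasSum q 1)
    (hqL : Tendsto (fun n : ℕ => (n : ℝ) ^ ρ * q n / L n) atTop (𝓝 c)) :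
    SubexpDensity q where
  nonneg := hq
  hasSum := hqs
  eventually_pos := eventually_pos_of_tendsto_rpow_mul_div hLpos hc hqL
  tendsto_shift := tendsto_shift_div_of_tendsto_rpow_mul_div hL hLpos hc hqL
  exists_le_mul := exists_le_mul_of_tendsto_rpow_mul_div hL hLpos hc hρ hqL

end RegularlyVarying

section ConvPow

variable {q : ℕ → ℝ} {δ : ℝ}

lemma convPow_nonneg (hq : ∀ n, 0 ≤ q n) : ∀ k n, 0 ≤ convPow q k n
  | 0, n => by rw [convPow]; positivity
  | k + 1, n => sum_nonneg fun i _ => mul_nonneg (convPow_nonneg hq k i) (hq _)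

lemma convPow_eq_zero_of_lt (hq0 : q 0 = 0) : ∀ {k n : ℕ}, n < k → convPow q k n = 0
  | k + 1, n, h => by
    refine sum_eq_zero fun i hi => ?_
    rcases lt_or_eq_of_le (Nat.lt_succ_iff.1 (mem_range.1 hi)) with hi | rfl
    · rw [convPow_eq_zero_of_lt hq0 (show i < k by omega), zero_mul]
    · rw [Nat.sub_self, hq0, mul_zero]

lemma hasSum_convPow (hq : ∀ n, 0 ≤ q n) (hqs : HasSum q 1) : ∀ k, HasSum (convPow q k) 1
  | 0 => by
    convert hasSum_ite_eq 0 (1 : ℝ) using 1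
    ext n; rw [convPow]
  | k + 1 => by
    have hk := hasSum_convPow hq hqs k
    have hnorm {f : ℕ → ℝ} (hf : ∀ n, 0 ≤ f n) (hfs : Summable f) : Summable fun n => ‖f n‖ :=
      hfs.congr fun n => (Real.norm_of_nonneg (hf n)).symm
    have := hasSum_sum_range_mul_of_summable_norm (hnorm (convPow_nonneg hq k) hk.summable)
      (hnorm hq hqs.summable)
    rwa [hk.tsum_eq, hqs.tsum_eq, one_mul] at this

lemma Zc_nonneg (hq : ∀ n, 0 ≤ q n) (hδ : 0 ≤ δ) (n : ℕ) : 0 ≤ Zc q δ n :=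
  sum_nonneg fun k _ => mul_nonneg (pow_nonneg hδ k) (convPow_nonneg hq k n)

lemma Zc_eq_sum_range_of_le (hq0 : q 0 = 0) {n K : ℕ} (h : n ≤ K) :
    Zc q δ n = ∑ k ∈ range (K + 1), δ ^ k * convPow q k n := by
  refine sum_subset (range_subset_range.2 (by omega)) fun k _ hk => ?_
  rw [convPow_eq_zero_of_lt hq0 (by simpa using hk), mul_zero]

lemma Zc_eq_mul_sum (hq0 : q 0 = 0) {n : ℕ} (hn : 0 < n) :
    Zc q δ n = δ * ∑ i ∈ range (n + 1), Zc q δ i * q (n - i) := by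
  obtain ⟨m, rfl⟩ := Nat.exists_eq_add_of_lt hn
  have hi : ∀ i ∈ range (m + 2), Zc q δ i * q (m + 1 - i) =
      (∑ k ∈ range (m + 1), δ ^ k * convPow q k i) * q (m + 1 - i) := by
    intro i hi
    rcases lt_or_eq_of_le (Nat.lt_succ_iff.1 (mem_range.1 hi)) with hi | rfl
    · rw [Zc_eq_sum_range_of_le hq0 (show i ≤ m by omega)]
    · rw [Nat.sub_self, hq0, mul_zero, mul_zero]
  rw [zero_add, sum_congr rfl hi, Zc, sum_range_succ', pow_zero, one_mul, convPow,
    if_neg (by omega), add_zero, mul_sum]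
  simp only [sum_mul, mul_sum, convPow, pow_succ]
  rw [sum_comm]
  refine sum_congr rfl fun k _ => sum_congr rfl fun i _ => by ring

lemma Zc_eq_mul_sum_update (hq0 : q 0 = 0) {n : ℕ} (hn : 0 < n) :
    Zc q δ n = δ * ∑ i ∈ range (n + 1), Function.update (Zc q δ) n 0 i * q (n - i) := by
  rw [Zc_eq_mul_sum hq0 hn, sum_range_succ, sum_range_succ, Nat.sub_self, hq0, mul_zero,
    mul_zero]
  congr 2
  exact sum_congr rfl fun i hi => by rw [Function.update_of_ne (by simp at hi; omega)]

lemma hasSum_Zc (hq : ∀ n, 0 ≤ q n) (hq0 : q 0 = 0) (hqs : HasSum q 1) (hδ0 : 0 ≤ δ)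
    (hδ1 : δ < 1) : HasSum (Zc q δ) (1 - δ)⁻¹ := by
  set F : ℕ × ℕ → ℝ := fun p => δ ^ p.1 * convPow q p.1 p.2
  have hF0 : 0 ≤ F := fun p => mul_nonneg (pow_nonneg hδ0 _) (convPow_nonneg hq _ _)
  have hrow (k : ℕ) : HasSum (fun n => F (k, n)) (δ ^ k) := by
    simpa using (hasSum_convPow hq hqs k).mul_left (δ ^ k)
  have hgeom := hasSum_geometric_of_lt_one hδ0 hδ1
  have hFs : Summable F := (summable_prod_of_nonneg hF0).2
    ⟨fun k => (hrow k).summable, by simpa only [(hrow _).tsum_eq] using hgeom.summable⟩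
  have hF : HasSum F (1 - δ)⁻¹ := by
    convert hFs.hasSum using 1
    exact ((hFs.hasSum.prod_fiberwise hrow).unique hgeom).symm
  have hcol (n : ℕ) : HasSum (fun k => F (k, n)) (Zc q δ n) :=
    hasSum_sum_of_ne_finset_zero fun k hk => by
      simp only [F, convPow_eq_zero_of_lt hq0 (show n < k by simpa using hk), mul_zero]
  exact ((Equiv.prodComm ℕ ℕ).hasSum_iff.2 hF).prod_fiberwise hcol

end ConvPow

lemma sum_range_succ_eq_add_sum_Ico_add (f : ℕ → ℝ) {m N : ℕ} (h : 2 * m < N) :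
    ∑ i ∈ range (N + 1), f i = ∑ i ∈ range (m + 1), f i + ∑ i ∈ Ico (m + 1) (N - m), f i
      + ∑ j ∈ range (m + 1), f (N - j) := by
  rw [← sum_range_add_sum_Ico _ (show N - m ≤ N + 1 by omega),
    ← sum_range_add_sum_Ico _ (show m + 1 ≤ N - m by omega), ← Nat.Ico_zero_eq_range (m + 1),
    sum_Ico_reflect f 0 (by omega), Nat.sub_zero, show N + 1 - (m + 1) = N - m by omega]

section Tail

variable {q : ℕ → ℝ}

lemma sum_le_one_sub_sum_range (hq : ∀ n, 0 ≤ q n) (hqs : HasSum q 1) {m : ℕ} {s : Finset ℕ}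
    (hs : ∀ i ∈ s, m < i) : ∑ i ∈ s, q i ≤ 1 - ∑ i ∈ range (m + 1), q i := by
  have hdisj : Disjoint s (range (m + 1)) :=
    disjoint_left.2 fun i hi hi' => by have := hs i hi; simp at hi'; omega
  have := sum_le_hasSum (s ∪ range (m + 1)) (fun i _ => hq i) hqs
  rw [sum_union hdisj] at this
  linarith

lemma sum_Ico_mul_sub_le (hq : ∀ n, 0 ≤ q n) (hqs : HasSum q 1) {C : ℝ} {m N : ℕ}
    (hC : ∀ j, N ≤ 2 * j → j ≤ N → q j ≤ C * q N) :
    ∑ i ∈ Ico (m + 1) (N - m), q i * q (N - i)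
      ≤ 2 * C * (1 - ∑ i ∈ range (m + 1), q i) * q N := by
  have hCN : 0 ≤ C * q N := (hq N).trans (hC N (by omega) le_rfl)
  -- the larger of `i` and `N - i` lies in `[N/2, N]`
  have hpt : ∀ i ≤ N, q i * q (N - i) ≤ C * q N * (q i + q (N - i)) := by
    intro i hi
    rcases le_total (2 * i) N with h | h
    · nlinarith [hC (N - i) (by omega) (by omega), hq i, hq (N - i)]
    · nlinarith [hC i (by omega) hi, hq i, hq (N - i)]
  have htail : ∑ i ∈ Ico (m + 1) (N - m), q i ≤ 1 - ∑ i ∈ range (m + 1), q i :=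
    sum_le_one_sub_sum_range hq hqs fun i hi => by simp at hi; omega
  have hrefl : ∑ i ∈ Ico (m + 1) (N - m), q (N - i) = ∑ i ∈ Ico (m + 1) (N - m), q i := by
    rcases le_or_gt m N with h | h
    · rw [sum_Ico_reflect q (m + 1) (by omega)]
      congr 2 <;> omega
    · simp only [Finset.Ico_eq_empty_of_le (show N - m ≤ m + 1 by omega), sum_empty]
  calc ∑ i ∈ Ico (m + 1) (N - m), q i * q (N - i)
      ≤ ∑ i ∈ Ico (m + 1) (N - m), C * q N * (q i + q (N - i)) :=
        sum_le_sum fun i hi => hpt i (by simp at hi; omega)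
    _ = 2 * (C * q N) * ∑ i ∈ Ico (m + 1) (N - m), q i := by
        rw [← mul_sum, sum_add_distrib, hrefl]; ring
    _ ≤ 2 * (C * q N) * (1 - ∑ i ∈ range (m + 1), q i) := by gcongr
    _ = 2 * C * (1 - ∑ i ∈ range (m + 1), q i) * q N := by ring

end Tail

namespace SubexpDensity

variable {q : ℕ → ℝ}

lemma eventually_forall_shift_mem_Icc (hq : SubexpDensity q) {ε : ℝ} (hε : 0 < ε) (m : ℕ) :
    ∀ᶠ n in atTop, ∀ i ≤ m, q (n - i) ∈ Icc ((1 - ε) * q n) ((1 + ε) * q n) := by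
  have hall := (range (m + 1)).eventually_all.2 fun i _ =>
    (hq.tendsto_shift i).eventually (Metric.closedBall_mem_nhds 1 hε)
  filter_upwards [hall, hq.eventually_pos] with n hn hqn i hi
  have h := abs_le.1 (hn i (by simpa [Nat.lt_succ_iff] using hi))
  rw [Set.mem_Icc, ← le_div_iff₀ hqn, ← div_le_iff₀ hqn]
  constructor <;> linarith [h.1, h.2]

theorem eventually_sum_mul_le (hq : SubexpDensity q) {ε : ℝ} (hε : 0 < ε) :
    ∀ᶠ m in atTop, ∀ᶠ n in atTop, ∀ (u : ℕ → ℝ) (b : ℝ), (∀ i, 0 ≤ u i) → 0 ≤ b →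
      (∀ i, m < i → i ≤ n → u i ≤ b * q i) →
      ∑ i ∈ range (n + 1), u i * q (n - i)
        ≤ ((1 + ε) * ∑ i ∈ range (m + 1), u i + (1 + 2 * ε) * b) * q n := by
  obtain ⟨C, hC⟩ := hq.exists_le_mul
  have htail : Tendsto (fun m => 2 * C * (1 - ∑ i ∈ range (m + 1), q i)) atTop (𝓝 0) := by
    have := hq.hasSum.tendsto_sum_nat.comp (tendsto_add_atTop_nat 1)
    simpa using (tendsto_const_nhds (x := (1 : ℝ)).sub this).const_mul (2 * C)
  filter_upwards [htail.eventually (eventually_le_nhds hε)] with m hm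
  filter_upwards [hC, hq.eventually_forall_shift_mem_Icc hε m, eventually_gt_atTop (2 * m)]
    with n hCn hshift hn u b hu hb hub
  have hqn := hq.nonneg n
  have h₁ : ∑ i ∈ range (m + 1), u i * q (n - i) ≤ (1 + ε) * (∑ i ∈ range (m + 1), u i) * q n :=
    calc ∑ i ∈ range (m + 1), u i * q (n - i) ≤ ∑ i ∈ range (m + 1), u i * ((1 + ε) * q n) :=
          sum_le_sum fun i hi =>
            mul_le_mul_of_nonneg_left (hshift i (Nat.lt_succ_iff.1 (mem_range.1 hi))).2 (hu i)
      _ = (1 + ε) * (∑ i ∈ range (m + 1), u i) * q n := by rw [← sum_mul]; ring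
  have h₂ : ∑ i ∈ Ico (m + 1) (n - m), u i * q (n - i) ≤ ε * b * q n :=
    calc ∑ i ∈ Ico (m + 1) (n - m), u i * q (n - i)
        ≤ ∑ i ∈ Ico (m + 1) (n - m), b * (q i * q (n - i)) := sum_le_sum fun i hi => by
          rw [← mul_assoc]; simp only [Finset.mem_Ico] at hi
          exact mul_le_mul_of_nonneg_right (hub i (by omega) (by omega)) (hq.nonneg _)
      _ ≤ b * (2 * C * (1 - ∑ i ∈ range (m + 1), q i) * q n) := by
          rw [← mul_sum]; gcongr; exact sum_Ico_mul_sub_le hq.nonneg hq.hasSum hCn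
      _ ≤ ε * b * q n := by
          rw [mul_comm ε b, mul_assoc b]; gcongr
  have h₃ : ∑ j ∈ range (m + 1), u (n - j) * q (n - (n - j)) ≤ (1 + ε) * b * q n :=
    calc ∑ j ∈ range (m + 1), u (n - j) * q (n - (n - j))
        ≤ ∑ j ∈ range (m + 1), (1 + ε) * b * q n * q j := sum_le_sum fun j hj => by
          have hj := Nat.lt_succ_iff.1 (mem_range.1 hj)
          rw [Nat.sub_sub_self (by omega)]
          refine mul_le_mul_of_nonneg_right ?_ (hq.nonneg j)
          calc u (n - j) ≤ b * q (n - j) := hub _ (by omega) (by omega)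
            _ ≤ b * ((1 + ε) * q n) := by gcongr; exact (hshift j hj).2
            _ = (1 + ε) * b * q n := by ring
      _ ≤ (1 + ε) * b * q n * 1 := by
          rw [← mul_sum]; gcongr; exact sum_le_hasSum _ (fun i _ => hq.nonneg i) hq.hasSum
      _ = (1 + ε) * b * q n := mul_one _
  rw [sum_range_succ_eq_add_sum_Ico_add _ hn]
  linarith

theorem eventually_le_sum_mul (hq : SubexpDensity q) {ε : ℝ} (hε : 0 < ε) (m : ℕ) :
    ∀ᶠ n in atTop, ∀ (u : ℕ → ℝ) (a : ℝ), (∀ i, 0 ≤ u i) → 0 ≤ a →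
      (∀ i, m < i → i ≤ n → a * q i ≤ u i) →
      (1 - ε) * (∑ i ∈ range (m + 1), u i + a * ∑ i ∈ range (m + 1), q i) * q n
        ≤ ∑ i ∈ range (n + 1), u i * q (n - i) := by
  filter_upwards [hq.eventually_forall_shift_mem_Icc hε m, eventually_gt_atTop (2 * m)]
    with n hshift hn u a hu ha hau
  have h₁ : (1 - ε) * (∑ i ∈ range (m + 1), u i) * q n ≤ ∑ i ∈ range (m + 1), u i * q (n - i) :=
    calc (1 - ε) * (∑ i ∈ range (m + 1), u i) * q n
        = ∑ i ∈ range (m + 1), u i * ((1 - ε) * q n) := by rw [← sum_mul]; ring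
      _ ≤ ∑ i ∈ range (m + 1), u i * q (n - i) := sum_le_sum fun i hi =>
          mul_le_mul_of_nonneg_left (hshift i (Nat.lt_succ_iff.1 (mem_range.1 hi))).1 (hu i)
  have h₂ : 0 ≤ ∑ i ∈ Ico (m + 1) (n - m), u i * q (n - i) :=
    sum_nonneg fun i _ => mul_nonneg (hu i) (hq.nonneg _)
  have h₃ : (1 - ε) * (a * ∑ j ∈ range (m + 1), q j) * q n
      ≤ ∑ j ∈ range (m + 1), u (n - j) * q (n - (n - j)) :=
    calc (1 - ε) * (a * ∑ j ∈ range (m + 1), q j) * q n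
        = ∑ j ∈ range (m + 1), a * ((1 - ε) * q n) * q j := by
          rw [mul_sum, mul_sum, sum_mul]; exact sum_congr rfl fun j _ => by ring
      _ ≤ ∑ j ∈ range (m + 1), u (n - j) * q (n - (n - j)) := sum_le_sum fun j hj => by
          have hj := Nat.lt_succ_iff.1 (mem_range.1 hj)
          rw [Nat.sub_sub_self (by omega)]
          refine mul_le_mul_of_nonneg_right ?_ (hq.nonneg j)
          calc a * ((1 - ε) * q n) ≤ a * q (n - j) := by gcongr; exact (hshift j hj).1
            _ ≤ u (n - j) := hau _ (by omega) (by omega)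
  rw [sum_range_succ_eq_add_sum_Ico_add _ hn]
  linarith

section Renewal

variable {q u : ℕ → ℝ} {δ S : ℝ}

lemma eventually_div_nonneg (hq : SubexpDensity q) (hu : ∀ n, 0 ≤ u n) :
    ∀ᶠ n in atTop, 0 ≤ u n / q n :=
  hq.eventually_pos.mono fun n hn => div_nonneg (hu n) hn.le

lemma limsup_div_le_of_renewal (hq : SubexpDensity q) (hδ : 0 ≤ δ) (hu : ∀ n, 0 ≤ u n)
    (hus : HasSum u S) (hren : ∀ᶠ n in atTop, u n = δ * ∑ i ∈ range (n + 1), u i * q (n - i))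
    (hbdd : IsBoundedUnder (· ≤ ·) atTop fun n => u n / q n) :
    limsup (fun n => u n / q n) atTop ≤ δ * (S + limsup (fun n => u n / q n) atTop) := by
  set β := limsup (fun n => u n / q n) atTop
  have hf0 := hq.eventually_div_nonneg hu
  have hcob : IsCoboundedUnder (· ≤ ·) atTop fun n => u n / q n :=
    (isBoundedUnder_of_eventually_ge hf0).isCoboundedUnder_le
  have hβ0 : 0 ≤ β := le_limsup_of_frequently_le hf0.frequently hbdd
  have key : ∀ ε > 0, β ≤ δ * ((1 + ε) * S + (1 + 2 * ε) * (β + ε)) := by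
    intro ε hε
    have hub : ∀ᶠ i in atTop, u i ≤ (β + ε) * q i := by
      filter_upwards [eventually_lt_of_limsup_lt (lt_add_of_pos_right β hε) hbdd,
        hq.eventually_pos] with i hi hqi
      exact ((div_lt_iff₀ hqi).1 hi).le
    obtain ⟨t, ht⟩ := eventually_atTop.1 hub
    obtain ⟨m, hm, htm⟩ := ((hq.eventually_sum_mul_le hε).and (eventually_ge_atTop t)).exists
    refine limsup_le_of_le hcob ?_
    filter_upwards [hm, hren, hq.eventually_pos] with n hn hren hqn
    rw [div_le_iff₀ hqn, hren, mul_assoc]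
    refine mul_le_mul_of_nonneg_left ?_ hδ
    refine (hn u _ hu (by linarith) fun i hi _ => ht i (by omega)).trans ?_
    gcongr
    exact sum_le_hasSum _ (fun i _ => hu i) hus
  have hlim : Tendsto (fun ε => δ * ((1 + ε) * S + (1 + 2 * ε) * (β + ε))) (𝓝[>] 0)
      (𝓝 (δ * (S + β))) :=
    ((by fun_prop : Continuous fun ε : ℝ => δ * ((1 + ε) * S + (1 + 2 * ε) * (β + ε))).tendsto'
      0 _ (by ring)).mono_left nhdsWithin_le_nhds
  exact ge_of_tendsto hlim (eventually_nhdsWithin_of_forall key)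

lemma le_liminf_div_of_renewal (hq : SubexpDensity q) (hδ : 0 ≤ δ) (hu : ∀ n, 0 ≤ u n)
    (hus : HasSum u S) (hren : ∀ᶠ n in atTop, u n = δ * ∑ i ∈ range (n + 1), u i * q (n - i))
    (hbdd : IsBoundedUnder (· ≤ ·) atTop fun n => u n / q n) :
    δ * (S + liminf (fun n => u n / q n) atTop) ≤ liminf (fun n => u n / q n) atTop := by
  set ℓ := liminf (fun n => u n / q n) atTop
  have hf0 := hq.eventually_div_nonneg hu
  have hbdd' : IsBoundedUnder (· ≥ ·) atTop fun n => u n / q n :=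
    isBoundedUnder_of_eventually_ge hf0
  have hℓ0 : 0 ≤ ℓ := le_liminf_of_le hbdd.isCoboundedUnder_ge hf0
  have key : ∀ ε ∈ Ioo (0 : ℝ) 1,
      δ * ((1 - ε) * ((S - ε) + max (ℓ - ε) 0 * (1 - ε))) ≤ ℓ := by
    rintro ε ⟨hε, hε1⟩
    have hlb : ∀ᶠ i in atTop, max (ℓ - ε) 0 * q i ≤ u i := by
      filter_upwards [eventually_lt_of_lt_liminf (sub_lt_self ℓ hε) hbdd', hq.eventually_pos]
        with i hi hqi
      rw [max_mul_of_nonneg _ _ hqi.le, zero_mul]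
      exact max_le ((lt_div_iff₀ hqi).1 hi).le (hu i)
    obtain ⟨t, ht⟩ := eventually_atTop.1 hlb
    have hpartial {v : ℕ → ℝ} {s : ℝ} (hv : HasSum v s) :
        ∀ᶠ m in atTop, s - ε < ∑ i ∈ range (m + 1), v i :=
      (hv.tendsto_sum_nat.comp (tendsto_add_atTop_nat 1)).eventually
        (eventually_gt_nhds (sub_lt_self s hε))
    obtain ⟨m, ⟨hmu, hmq⟩, htm⟩ :=
      ((hpartial hus).and (hpartial hq.hasSum) |>.and (eventually_ge_atTop t)).exists
    refine le_liminf_of_le hbdd.isCoboundedUnder_ge ?_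
    filter_upwards [hq.eventually_le_sum_mul hε m, hren, hq.eventually_pos] with n hn hren hqn
    rw [le_div_iff₀ hqn, hren, mul_assoc]
    refine mul_le_mul_of_nonneg_left ?_ hδ
    refine le_trans ?_ (hn u _ hu (le_max_right _ _) fun i hi _ => ht i (by omega))
    gcongr
  have hlim : Tendsto (fun ε => δ * ((1 - ε) * ((S - ε) + max (ℓ - ε) 0 * (1 - ε))))
      (𝓝[>] 0) (𝓝 (δ * (S + ℓ))) :=
    ((by fun_prop : Continuous fun ε : ℝ =>
      δ * ((1 - ε) * ((S - ε) + max (ℓ - ε) 0 * (1 - ε)))).tendsto' 0 _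
        (by simp [max_eq_left hℓ0])).mono_left nhdsWithin_le_nhds
  exact le_of_tendsto hlim (mem_of_superset (Ioo_mem_nhdsGT one_pos) key)

theorem tendsto_div_of_renewal (hq : SubexpDensity q) (hδ0 : 0 ≤ δ) (hδ1 : δ < 1)
    (hu : ∀ n, 0 ≤ u n) (hus : HasSum u S)
    (hren : ∀ᶠ n in atTop, u n = δ * ∑ i ∈ range (n + 1), u i * q (n - i))
    {B : ℝ} (hB : ∀ᶠ n in atTop, u n ≤ B * q n) :
    Tendsto (fun n => u n / q n) atTop (𝓝 (δ * S / (1 - δ))) := by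
  have hbdd : IsBoundedUnder (· ≤ ·) atTop fun n => u n / q n :=
    isBoundedUnder_of_eventually_le <| (hB.and hq.eventually_pos).mono fun n hn =>
      (div_le_iff₀ hn.2).2 hn.1
  have hbdd' : IsBoundedUnder (· ≥ ·) atTop fun n => u n / q n :=
    isBoundedUnder_of_eventually_ge (hq.eventually_div_nonneg hu)
  have hsup := hq.limsup_div_le_of_renewal hδ0 hu hus hren hbdd
  have hinf := hq.le_liminf_div_of_renewal hδ0 hu hus hren hbdd
  have hle := liminf_le_limsup hbdd hbdd'
  have h1δ : 0 < 1 - δ := sub_pos.2 hδ1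
  have hsup' : limsup (fun n => u n / q n) atTop ≤ δ * S / (1 - δ) :=
    (le_div_iff₀ h1δ).2 (by linarith)
  have hinf' : δ * S / (1 - δ) ≤ liminf (fun n => u n / q n) atTop :=
    (div_le_iff₀ h1δ).2 (by linarith)
  exact tendsto_of_liminf_eq_limsup (le_antisymm (hle.trans hsup') hinf')
    (le_antisymm hsup' (hinf'.trans hle)) hbdd hbdd'

end Renewal

section PartitionFunction

variable {q : ℕ → ℝ} {δ : ℝ}

theorem exists_Zc_le_mul (hq : SubexpDensity q) (hq0 : q 0 = 0) (hδ0 : 0 ≤ δ) (hδ1 : δ < 1) :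
    ∃ B, ∀ᶠ n in atTop, Zc q δ n ≤ B * q n := by
  set S := (1 - δ)⁻¹
  have hZ := hasSum_Zc hq.nonneg hq0 hq.hasSum hδ0 hδ1
  have hZ0 := Zc_nonneg hq.nonneg hδ0
  obtain ⟨ε, hε, hεδ⟩ : ∃ ε : ℝ, 0 < ε ∧ δ * (1 + 2 * ε) ≤ (1 + δ) / 2 :=
    ⟨(1 - δ) / 4, by linarith, by nlinarith⟩
  obtain ⟨n₀, hn₀⟩ := eventually_atTop.1 hq.eventually_pos
  obtain ⟨m, hm, hmn₀⟩ := ((hq.eventually_sum_mul_le hε).and (eventually_ge_atTop n₀)).exists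
  obtain ⟨n₁, hn₁⟩ := eventually_atTop.1 hm
  -- up to `n₁` we use `Zc ≤ S`; beyond it, the renewal equation contracts by `(1 + δ) / 2`
  obtain ⟨B, hBfin, hBS⟩ : ∃ B, (∀ i ∈ Finset.Ioc m n₁, S ≤ B * q i) ∧
      2 * δ * (1 + ε) * S / (1 - δ) ≤ B := by
    refine (((Finset.Ioc m n₁).eventually_all.2 fun i hi => ?_).and
      (eventually_ge_atTop _)).exists
    exact (tendsto_id.atTop_mul_const (hn₀ i (by simp at hi; omega))).eventually_ge_atTop S
  have hB0 : 0 ≤ B := le_trans (by positivity) hBS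
  refine ⟨B, (eventually_gt_atTop m).mono fun n hn => ?_⟩
  induction n using Nat.strong_induction_on with
  | _ n ih =>
  rcases le_or_gt n n₁ with hn₁' | hn₁'
  · exact (le_hasSum hZ n fun i _ => hZ0 i).trans (hBfin n (Finset.mem_Ioc.2 ⟨hn, hn₁'⟩))
  set v := Function.update (Zc q δ) n 0
  have hv0 (i : ℕ) : 0 ≤ v i := by
    simp only [v, Function.update_apply]; split_ifs
    exacts [le_rfl, hZ0 i]
  have hvq (i : ℕ) (hmi : m < i) (hin : i ≤ n) : v i ≤ B * q i := by
    simp only [v, Function.update_apply]; split_ifs with h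
    exacts [mul_nonneg hB0 (hq.nonneg i), ih i (lt_of_le_of_ne hin h) hmi]
  have hvm : ∑ i ∈ range (m + 1), v i ≤ S := by
    rw [sum_congr rfl fun i hi =>
      (Function.update_of_ne (show i ≠ n by simp at hi; omega) _ _ : v i = Zc q δ i)]
    exact sum_le_hasSum _ (fun i _ => hZ0 i) hZ
  have hqn := hq.nonneg n
  rw [Zc_eq_mul_sum_update hq0 (by omega)]
  calc δ * ∑ i ∈ range (n + 1), v i * q (n - i)
      ≤ δ * (((1 + ε) * S + (1 + 2 * ε) * B) * q n) := by
        gcongr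
        exact (hn₁ n hn₁'.le v B hv0 hB0 hvq).trans (by gcongr)
    _ ≤ B * q n := by
        rw [← mul_assoc]
        refine mul_le_mul_of_nonneg_right ?_ hqn
        have := (div_le_iff₀ (sub_pos.2 hδ1)).1 hBS
        nlinarith [mul_le_mul_of_nonneg_right hεδ hB0]

theorem tendsto_Zc_div (hq : SubexpDensity q) (hq0 : q 0 = 0) (hδ0 : 0 ≤ δ) (hδ1 : δ < 1) :
    Tendsto (fun n => Zc q δ n / q n) atTop (𝓝 (δ / (1 - δ) ^ 2)) := by
  obtain ⟨B, hB⟩ := hq.exists_Zc_le_mul hq0 hδ0 hδ1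
  have h := hq.tendsto_div_of_renewal hδ0 hδ1 (Zc_nonneg hq.nonneg hδ0)
    (hasSum_Zc hq.nonneg hq0 hq.hasSum hδ0 hδ1)
    ((eventually_gt_atTop 0).mono fun n hn => Zc_eq_mul_sum hq0 hn) hB
  convert h using 2
  have : (1 - δ) ≠ 0 := (sub_pos.2 hδ1).ne'
  field_simp

end PartitionFunction

end SubexpDensity

/-- Strictly delocalized regime, constrained case:
for `0 < δ < 1`, `Z^c_{δ,N} ~ (δ c_q/(1−δ)²) · L(N)/N^{3/2}` as `N → ∞`. -/
theorem stmt_3 (L : ℕ → ℝ) (hLpos : ∀ n, 0 < L n) (hL : SlowlyVaryingNat L)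
    (c_q : ℝ) (hcq : 0 < c_q)
    (q : ℕ → ℝ) (hq0 : q 0 = 0) (hqmem : ∀ n, q n ∈ Set.Icc (0 : ℝ) 1)
    (hqsum : ∑' n, q n = 1)
    (hqa : Tendsto (fun n : ℕ => (n : ℝ) ^ ((3 : ℝ) / 2) * q n / L n) atTop (nhds c_q))
    (δ : ℝ) (hδ0 : 0 < δ) (hδ1 : δ < 1) :
    Tendsto (fun N : ℕ =>
        Zc q δ N / (δ * c_q / (1 - δ) ^ 2 * L N / (N : ℝ) ^ ((3 : ℝ) / 2)))
      atTop (nhds 1) := by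
  have hqs : HasSum q 1 := by
    have hs : Summable q := by
      by_contra h
      simp [tsum_eq_zero_of_not_summable h] at hqsum
    exact hqsum ▸ hs.hasSum
  have hq := subexpDensity_of_tendsto_rpow_mul_div hL hLpos hcq (by norm_num)
    (fun n => (hqmem n).1) hqs hqa
  have h := ((hq.tendsto_Zc_div hq0 hδ0.le hδ1).mul hqa).div_const (δ * c_q / (1 - δ) ^ 2)
  have h1δ : (1 - δ) ≠ 0 := (sub_pos.2 hδ1).ne'
  rw [show δ / (1 - δ) ^ 2 * c_q / (δ * c_q / (1 - δ) ^ 2) = 1 by field_simp] at h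
  refine h.congr' ?_
  filter_upwards [hq.eventually_pos, eventually_gt_atTop 0] with N hqN hN
  have := hLpos N
  have : (0 : ℝ) < (N : ℝ) ^ ((3 : ℝ) / 2) := by positivity
  field_simp
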